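/- Let 𝒞 = (S, Δ, r) be a semimatroid and define r'(σ) = max{r(τ) : τ ⊆ σ, τ ∈ Δ} for σ ⊆ S. Then r' is the rank function of a matroid on S, and Δ is a strong pseudo-independence complex over this matroid. -/

import Mathlib

/-- A semimatroid on ground type `α`: a nonempty downward-closed collection `Δ` of finite
subsets (a simplicial complex) together with a rank function `r` satisfying the five
semimatroid axioms of Ardila. -/
structure IsSemimatroid {α : Type*} [DecidableEq α] (Δ : Finset α → Prop) (r : Finset α → ℕ) :
    Prop where
  nonempty : ∃ σ, Δ σ
  down_closed : ∀ ⦃σ τ : Finset α⦄, Δ σ → τ ⊆ σ → Δ τ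
  rank_le_card : ∀ ⦃σ⦄, Δ σ → r σ ≤ σ.card
  rank_mono : ∀ ⦃σ τ⦄, Δ σ → Δ τ → σ ⊆ τ → r σ ≤ r τ
  submodular : ∀ ⦃σ τ⦄, Δ σ → Δ τ → Δ (σ ∪ τ) → r (σ ∪ τ) + r (σ ∩ τ) ≤ r σ + r τ
  union_mem : ∀ ⦃σ τ⦄, Δ σ → Δ τ → r σ = r (σ ∩ τ) → Δ (σ ∪ τ)
  exchange : ∀ ⦃σ τ⦄, Δ σ → Δ τ → r σ < r τ → ∃ y ∈ τ \ σ, Δ (insert y σ)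

/-- The induced matroid rank function: `r'(σ) = max {r(τ) : τ ⊆ σ, τ ∈ Δ}`. -/
def inducedRank {α : Type*} [DecidableEq α] (Δ : Finset (Finset α)) (r : Finset α → ℕ)
    (σ : Finset α) : ℕ :=
  (σ.powerset.filter (· ∈ Δ)).sup r

/-!
Every `μ ∈ Δ` inside `σ` extends, by repeated use of the exchange axiom, to some `ν ∈ Δ`
inside `σ` with `r ν = r' σ`. Submodularity of `r'` then comes from applying submodularity
of `r` to `ν ∩ σ` and `ν ∩ τ`, where `ν` extends a maximiser for `σ ∩ τ` to one for `σ ∪ τ`.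
On faces of `Δ` the two ranks agree, so pseudo-independence is the exchange axiom applied to
`σ` and a maximiser for `insert x σ`, and strongness is the axiom `union_mem` applied to
`insert x σ` and `τ ∪ σ`, whose intersection is `σ`.
-/

open Finset

theorem le_inducedRank {α : Type*} [DecidableEq α] {Δ : Finset (Finset α)} {r : Finset α → ℕ}
    {τ σ : Finset α} (hτ : τ ∈ Δ) (hτσ : τ ⊆ σ) : r τ ≤ inducedRank Δ r σ :=
  le_sup (mem_filter.2 ⟨mem_powerset.2 hτσ, hτ⟩)

namespace IsSemimatroid

variable {α : Type*} [DecidableEq α]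

section Complex

variable {Δ : Finset α → Prop} {r : Finset α → ℕ}

theorem empty_mem (h : IsSemimatroid Δ r) : Δ ∅ := by
  obtain ⟨σ, hσ⟩ := h.nonempty
  exact h.down_closed hσ (empty_subset σ)

theorem rank_insert_le (h : IsSemimatroid Δ r) {σ : Finset α} {x : α} (hσx : Δ (insert x σ)) :
    r (insert x σ) ≤ r σ + 1 := by
  have hσ : Δ σ := h.down_closed hσx (subset_insert x σ)
  have hx : Δ {x} := h.down_closed hσx (singleton_subset_iff.2 (mem_insert_self x σ))
  have hsub := h.submodular hσ hx (by rwa [union_singleton])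
  have hx_le : r {x} ≤ 1 := h.rank_le_card hx
  rw [union_singleton] at hsub
  omega

theorem rank_le_rank_erase_add_one (h : IsSemimatroid Δ r) {π : Finset α} (hπ : Δ π) (x : α) :
    r π ≤ r (π.erase x) + 1 := by
  by_cases hx : x ∈ π
  · have := h.rank_insert_le (σ := π.erase x) (x := x) (by rwa [insert_erase hx])
    rwa [insert_erase hx] at this
  · rw [erase_eq_of_notMem hx]
    omega

theorem exists_superset_rank_ge (h : IsSemimatroid Δ r) {μ π : Finset α} (hμ : Δ μ) (hπ : Δ π) :
    ∃ ν, Δ ν ∧ μ ⊆ ν ∧ ν ⊆ μ ∪ π ∧ r π ≤ r ν := by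
  by_cases hr : r π ≤ r μ
  · exact ⟨μ, hμ, subset_rfl, subset_union_left, hr⟩
  obtain ⟨y, hy, hyμ⟩ := h.exchange hμ hπ (not_le.1 hr)
  have hdecr : (π \ insert y μ).card < (π \ μ).card := by
    rw [sdiff_insert]
    exact card_erase_lt_of_mem hy
  obtain ⟨ν, hν, hyμν, hνsub, hrν⟩ := h.exists_superset_rank_ge hyμ hπ
  refine ⟨ν, hν, (subset_insert y μ).trans hyμν, hνsub.trans ?_, hrν⟩
  rw [insert_union]
  exact insert_subset (mem_union_right μ (mem_sdiff.1 hy).1) subset_rfl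
termination_by (π \ μ).card

end Complex

section InducedRank

variable {Δ : Finset (Finset α)} {r : Finset α → ℕ}

theorem exists_inducedRank_eq (h : IsSemimatroid (· ∈ Δ) r) (σ : Finset α) :
    ∃ τ ∈ Δ, τ ⊆ σ ∧ r τ = inducedRank Δ r σ := by
  have hne : (σ.powerset.filter (· ∈ Δ)).Nonempty :=
    ⟨∅, mem_filter.2 ⟨empty_mem_powerset σ, h.empty_mem⟩⟩
  obtain ⟨τ, hτ, hval⟩ := exists_mem_eq_sup _ hne r
  rw [mem_filter, mem_powerset] at hτ
  exact ⟨τ, hτ.2, hτ.1, hval.symm⟩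

theorem inducedRank_of_mem (h : IsSemimatroid (· ∈ Δ) r) {σ : Finset α} (hσ : σ ∈ Δ) :
    inducedRank Δ r σ = r σ := by
  refine le_antisymm (Finset.sup_le fun τ hτ => ?_) (le_inducedRank hσ subset_rfl)
  rw [mem_filter, mem_powerset] at hτ
  exact h.rank_mono hτ.2 hσ hτ.1

theorem exists_superset_inducedRank_eq (h : IsSemimatroid (· ∈ Δ) r) {μ σ : Finset α}
    (hμ : μ ∈ Δ) (hμσ : μ ⊆ σ) :
    ∃ ν ∈ Δ, μ ⊆ ν ∧ ν ⊆ σ ∧ r ν = inducedRank Δ r σ := by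
  obtain ⟨π, hπ, hπσ, hrπ⟩ := h.exists_inducedRank_eq σ
  obtain ⟨ν, hν, hμν, hνsub, hrν⟩ := h.exists_superset_rank_ge hμ hπ
  have hνσ : ν ⊆ σ := hνsub.trans (union_subset hμσ hπσ)
  exact ⟨ν, hν, hμν, hνσ, le_antisymm (le_inducedRank hν hνσ) (hrπ ▸ hrν)⟩

theorem inducedRank_le_card (h : IsSemimatroid (· ∈ Δ) r) (σ : Finset α) :
    inducedRank Δ r σ ≤ σ.card := by
  obtain ⟨τ, hτ, hτσ, hrτ⟩ := h.exists_inducedRank_eq σ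
  exact hrτ ▸ (h.rank_le_card hτ).trans (card_le_card hτσ)

theorem inducedRank_mono (h : IsSemimatroid (· ∈ Δ) r) {σ τ : Finset α} (hστ : σ ⊆ τ) :
    inducedRank Δ r σ ≤ inducedRank Δ r τ := by
  obtain ⟨ρ, hρ, hρσ, hrρ⟩ := h.exists_inducedRank_eq σ
  exact hrρ ▸ le_inducedRank hρ (hρσ.trans hστ)

theorem inducedRank_submodular (h : IsSemimatroid (· ∈ Δ) r) (σ τ : Finset α) :
    inducedRank Δ r (σ ∪ τ) + inducedRank Δ r (σ ∩ τ) ≤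
      inducedRank Δ r σ + inducedRank Δ r τ := by
  obtain ⟨μ, hμ, hμsub, hrμ⟩ := h.exists_inducedRank_eq (σ ∩ τ)
  obtain ⟨ν, hν, hμν, hνsub, hrν⟩ :=
    h.exists_superset_inducedRank_eq hμ (hμsub.trans inter_subset_union)
  have hνσ : ν ∩ σ ∈ Δ := h.down_closed hν inter_subset_left
  have hντ : ν ∩ τ ∈ Δ := h.down_closed hν inter_subset_left
  have hunion : ν ∩ σ ∪ ν ∩ τ = ν := by
    rw [← inter_union_distrib_left, inter_eq_left.2 hνsub]
  have hsub := h.submodular hνσ hντ (by rw [hunion]; exact hν)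
  rw [hunion] at hsub
  have hμ_le : r μ ≤ r (ν ∩ σ ∩ (ν ∩ τ)) :=
    h.rank_mono hμ (h.down_closed hν (inter_subset_left.trans inter_subset_left))
      (subset_inter (subset_inter hμν (hμsub.trans inter_subset_left))
        (subset_inter hμν (hμsub.trans inter_subset_right)))
  have hσ_le : r (ν ∩ σ) ≤ inducedRank Δ r σ := le_inducedRank hνσ inter_subset_right
  have hτ_le : r (ν ∩ τ) ≤ inducedRank Δ r τ := le_inducedRank hντ inter_subset_right
  omega

theorem inducedRank_insert_le (h : IsSemimatroid (· ∈ Δ) r) (σ : Finset α) (x : α) :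
    inducedRank Δ r (insert x σ) ≤ inducedRank Δ r σ + 1 := by
  obtain ⟨π, hπ, hπσ, hrπ⟩ := h.exists_inducedRank_eq (insert x σ)
  have herase : π.erase x ⊆ σ := fun z hz =>
    (mem_insert.1 (hπσ (mem_of_mem_erase hz))).resolve_left (ne_of_mem_erase hz)
  have hle : r (π.erase x) ≤ inducedRank Δ r σ :=
    le_inducedRank (h.down_closed hπ (erase_subset x π)) herase
  have := h.rank_le_rank_erase_add_one hπ x
  omega

theorem insert_mem_of_inducedRank_lt (h : IsSemimatroid (· ∈ Δ) r) {σ : Finset α} {x : α}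
    (hσ : σ ∈ Δ) (hlt : inducedRank Δ r σ < inducedRank Δ r (insert x σ)) :
    insert x σ ∈ Δ := by
  obtain ⟨π, hπ, hπσ, hrπ⟩ := h.exists_inducedRank_eq (insert x σ)
  rw [h.inducedRank_of_mem hσ, ← hrπ] at hlt
  obtain ⟨y, hy, hyσ⟩ := h.exchange hσ hπ hlt
  obtain ⟨hyπ, hyσ'⟩ := mem_sdiff.1 hy
  obtain rfl : y = x := (mem_insert.1 (hπσ hyπ)).resolve_right hyσ'
  exact hyσ

theorem insert_union_mem_of_inducedRank_eq (h : IsSemimatroid (· ∈ Δ) r) {σ τ : Finset α}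
    {x : α} (hσ : σ ∈ Δ) (hxσ : x ∉ σ) (hxτ : x ∉ τ) (hxσΔ : insert x σ ∈ Δ)
    (heq : inducedRank Δ r (insert x σ) = inducedRank Δ r σ) (hτσ : τ ∪ σ ∈ Δ) :
    insert x τ ∪ σ ∈ Δ := by
  rw [h.inducedRank_of_mem hxσΔ, h.inducedRank_of_mem hσ] at heq
  have hinter : insert x σ ∩ (τ ∪ σ) = σ := by
    ext z
    simp only [mem_inter, mem_insert, mem_union]
    constructor
    · rintro ⟨rfl | hz, hz'⟩
      · exact absurd hz' (not_or.2 ⟨hxτ, hxσ⟩)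
      · exact hz
    · exact fun hz => ⟨Or.inr hz, Or.inr hz⟩
  have hmem := h.union_mem hxσΔ hτσ (by rw [hinter, heq])
  have hunion : insert x σ ∪ (τ ∪ σ) = insert x τ ∪ σ := by
    ext z
    simp only [mem_union, mem_insert]
    tauto
  rwa [hunion] at hmem

end InducedRank

end IsSemimatroid

/-- For a semimatroid `𝒞 = (S, Δ, r)`, the function
`r'(σ) = max {r(τ) : τ ⊆ σ, τ ∈ Δ}` is the rank function of a matroid on `S`, and `Δ` is a
strong pseudo-independence complex over this matroid. -/
theorem semimatroid_gives_strong_pseudo_independence {α : Type*} [DecidableEq α]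
    (Δ : Finset (Finset α)) (r : Finset α → ℕ)
    (h : IsSemimatroid (· ∈ Δ) r) :
    -- `r'` satisfies the matroid rank axioms
    (∀ σ : Finset α, inducedRank Δ r σ ≤ σ.card) ∧
    (∀ ⦃σ τ : Finset α⦄, σ ⊆ τ → inducedRank Δ r σ ≤ inducedRank Δ r τ) ∧
    (∀ σ τ : Finset α,
      inducedRank Δ r (σ ∪ τ) + inducedRank Δ r (σ ∩ τ) ≤
        inducedRank Δ r σ + inducedRank Δ r τ) ∧
    (∀ (σ : Finset α) (x : α), inducedRank Δ r (insert x σ) ≤ inducedRank Δ r σ + 1) ∧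
    -- `Δ` is a pseudo-independence complex over this matroid
    (∀ ⦃σ : Finset α⦄ ⦃x : α⦄, σ ∈ Δ → x ∉ σ →
      inducedRank Δ r σ < inducedRank Δ r (insert x σ) → insert x σ ∈ Δ) ∧
    -- `Δ` is strong over this matroid
    (∀ ⦃σ : Finset α⦄ ⦃x : α⦄, σ ∈ Δ → x ∉ σ →
      inducedRank Δ r (insert x σ) = inducedRank Δ r σ → insert x σ ∈ Δ →
      ∀ τ : Finset α, τ ∩ σ = ∅ → τ ∪ σ ∈ Δ → x ∉ τ → insert x τ ∪ σ ∈ Δ) :=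
  ⟨h.inducedRank_le_card, fun _ _ => h.inducedRank_mono, h.inducedRank_submodular,
    h.inducedRank_insert_le, fun _ _ hσ _ hlt => h.insert_mem_of_inducedRank_lt hσ hlt,
    fun _ _ hσ hxσ heq hxσΔ _ _ hτσ hxτ =>
      h.insert_union_mem_of_inducedRank_eq hσ hxσ hxτ hxσΔ heq hτσ⟩
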